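/- arXiv:2401.12572 — 3 statements merged into one kernel-verified Lean document; each statement's English description precedes it below -/
import Mathlib

section
/- Let A be an integral domain of characteristic 0 and a_0, a_1, a_2 ∈ A. The polynomial a_0 + a_1·z + a_2·z^2 ∈ A[z] is a sum of p squares of polynomials of degree ≤ 1 if and only if there exist α_1,...,α_p, β_1,...,β_p ∈ A with Σ α_i^2 = a_0, Σ β_j^2 = a_2, and Σ_{1 ≤ i < j ≤ p} (2α_i β_j - 2α_j β_i)^2 = 4·a_0·a_2 - a_1^2. -/
open Finset Polynomial

section aux
variable {A : Type*} [CommRing A] {p : ℕ}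

private lemma expand_sum_sq (α β : Fin p → A) :
    ∑ i, (C (α i) + X * C (β i)) ^ 2 =
      C (∑ i, α i ^ 2) + C (∑ i, 2 * α i * β i) * X + C (∑ i, β i ^ 2) * X ^ 2 := by
  rw [map_sum, map_sum, map_sum, Finset.sum_mul, Finset.sum_mul, ← Finset.sum_add_distrib,
    ← Finset.sum_add_distrib]
  refine Finset.sum_congr rfl fun i _ => ?_
  simp only [map_mul, map_pow, map_ofNat]
  ring

private lemma double_sum_split (g : Fin p → Fin p → A) (hd : ∀ i, g i i = 0)
    (hs : ∀ i j, g i j = g j i) :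
    ∑ i, ∑ j, g i j = 2 * ∑ i, ∑ j ∈ univ.filter (fun j => i < j), g i j := by
  have h1 : ∀ i : Fin p, (univ : Finset (Fin p)).filter (fun j => ¬ i < j)
      = insert i (univ.filter (fun j => j < i)) := by
    intro i
    ext j
    simp [not_lt, le_iff_lt_or_eq, or_comm]
  have h2 : ∑ i, ∑ j ∈ univ.filter (fun j => j < i), g i j
      = ∑ i, ∑ j ∈ univ.filter (fun j => i < j), g i j := by
    rw [Finset.sum_comm' (s' := fun y => univ.filter (fun x => y < x)) (t' := univ)
      (fun x y => by simp)]
    exact Finset.sum_congr rfl fun i _ => Finset.sum_congr rfl fun j _ => hs j i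
  calc ∑ i, ∑ j, g i j
      = ∑ i : Fin p, ((∑ j ∈ univ.filter (fun j => i < j), g i j)
          + ∑ j ∈ univ.filter (fun j => ¬ i < j), g i j) := by
        refine Finset.sum_congr rfl fun i _ => ?_
        rw [Finset.sum_filter_add_sum_filter_not]
    _ = 2 * ∑ i, ∑ j ∈ univ.filter (fun j => i < j), g i j := by
        rw [Finset.sum_add_distrib]
        have : ∀ i : Fin p, ∑ j ∈ univ.filter (fun j => ¬ i < j), g i j
            = ∑ j ∈ univ.filter (fun j => j < i), g i j := by
          intro i
          rw [h1, Finset.sum_insert (by simp), hd]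
          simp
        rw [Finset.sum_congr rfl fun i _ => this i, h2]
        ring

private lemma lagrange (α β : Fin p → A) :
    2 * (2 * ((∑ i, α i ^ 2) * (∑ i, β i ^ 2) - (∑ i, α i * β i) ^ 2))
      = 2 * (2 * ∑ i, ∑ j ∈ univ.filter (fun j => i < j), (α i * β j - α j * β i) ^ 2) := by
  rw [← double_sum_split (fun i j => (α i * β j - α j * β i) ^ 2) (fun i => by ring)
    (fun i j => by ring)]
  have e1 : (∑ i, α i ^ 2) * (∑ i, β i ^ 2) = ∑ i, ∑ j, α i ^ 2 * β j ^ 2 :=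
    Finset.sum_mul_sum _ _ _ _
  have e2 : (∑ i, α i * β i) ^ 2 = ∑ i, ∑ j, (α i * β i) * (α j * β j) := by
    rw [sq, Finset.sum_mul_sum]
  have hg : ∑ i, ∑ j, (α i * β j - α j * β i) ^ 2
      = (∑ i, ∑ j, α i ^ 2 * β j ^ 2) + (∑ i, ∑ j, α j ^ 2 * β i ^ 2)
        - 2 * ∑ i, ∑ j, (α i * β i) * (α j * β j) := by
    simp only [Finset.mul_sum, ← Finset.sum_add_distrib, ← Finset.sum_sub_distrib]
    exact Finset.sum_congr rfl fun i _ => Finset.sum_congr rfl fun j _ => by ring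
  have hswap : (∑ i, ∑ j, α j ^ 2 * β i ^ 2) = ∑ i, ∑ j, α i ^ 2 * β j ^ 2 :=
    Finset.sum_comm
  rw [hg, hswap, ← e1, ← e2]
  ring
end aux

private lemma quarter {A : Type*} [CommRing A] [IsDomain A] [CharZero A]
    {x y : A} (h : 2 * (2 * x) = 2 * (2 * y)) : x = y := by
  have h2 : (2 : A) ≠ 0 := two_ne_zero
  exact mul_left_cancel₀ h2 (mul_left_cancel₀ h2 h)

private lemma sum_four {A : Type*} [CommRing A] {p : ℕ} (α β : Fin p → A) :
    (∑ i, ∑ j ∈ univ.filter (fun j => i < j), (2 * α i * β j - 2 * α j * β i) ^ 2)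
      = 4 * ∑ i, ∑ j ∈ univ.filter (fun j => i < j), (α i * β j - α j * β i) ^ 2 := by
  simp only [Finset.mul_sum]
  exact Finset.sum_congr rfl fun i _ => Finset.sum_congr rfl fun j _ => by ring

private lemma twice {A : Type*} [CommRing A] {p : ℕ} (α β : Fin p → A) :
    (∑ i, 2 * α i * β i) = 2 * ∑ i, α i * β i := by
  rw [Finset.mul_sum]; exact Finset.sum_congr rfl fun i _ => by ring


/-- Let `A` be an integral domain of characteristic `0`. The quadratic polynomial
`a₀ + a₁·z + a₂·z²` in `A[z]` is a sum of `p` squares of polynomials of degree `≤ 1`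
iff there exist `α₁,…,α_p, β₁,…,β_p ∈ A` with `Σ αᵢ² = a₀`, `Σ βⱼ² = a₂` and
`Σ_{i<j} (2αᵢβⱼ - 2αⱼβᵢ)² = 4·a₀·a₂ - a₁²`. -/
theorem stmt_5 {A : Type*} [CommRing A] [IsDomain A] [CharZero A]
    (a₀ a₁ a₂ : A) (p : ℕ) :
    (∃ α β : Fin p → A,
        (C a₀ + C a₁ * X + C a₂ * X ^ 2 : A[X]) =
          ∑ i, (C (α i) + X * C (β i)) ^ 2) ↔
    (∃ α β : Fin p → A,
        (∑ i, α i ^ 2) = a₀ ∧ (∑ j, β j ^ 2) = a₂ ∧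
        (∑ i, ∑ j ∈ univ.filter (fun j => i < j),
            (2 * α i * β j - 2 * α j * β i) ^ 2) = 4 * a₀ * a₂ - a₁ ^ 2) := by
  constructor
  · rintro ⟨α, β, heq⟩
    rw [expand_sum_sq] at heq
    have h0 : a₀ = ∑ i, α i ^ 2 := by
      have := congrArg (fun q => q.coeff 0) heq
      simp only [coeff_add, coeff_C_mul, coeff_C, coeff_X_zero, coeff_X_pow] at this
      simpa using this
    have h1 : a₁ = ∑ i, 2 * α i * β i := by
      have := congrArg (fun q => q.coeff 1) heq
      simp only [coeff_add, coeff_C_mul, coeff_C, coeff_X_one, coeff_X_pow] at this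
      simpa using this
    have h2 : a₂ = ∑ i, β i ^ 2 := by
      have := congrArg (fun q => q.coeff 2) heq
      simp only [coeff_add, coeff_C_mul, coeff_C, coeff_X, coeff_X_pow] at this
      simpa using this
    refine ⟨α, β, h0.symm, h2.symm, ?_⟩
    have hl := quarter (lagrange α β)
    rw [sum_four, ← hl, h0, h1, h2, twice]
    ring
  · rintro ⟨α, β, h0, h2, h3⟩
    have hl := quarter (lagrange α β)
    rw [sum_four, ← hl, h0, h2] at h3
    have hsq : (2 * (∑ i, α i * β i) - a₁) * (2 * (∑ i, α i * β i) + a₁) = 0 := by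
      linear_combination -h3
    rcases mul_eq_zero.1 hsq with h | h
    · refine ⟨α, β, ?_⟩
      rw [expand_sum_sq, h0, h2, twice, sub_eq_zero.1 h]
    · refine ⟨α, fun i => -β i, ?_⟩
      rw [expand_sum_sq]
      have hmid : (∑ i, 2 * α i * -β i) = a₁ := by
        rw [twice α (fun i => -β i),
          show (∑ i, α i * -β i) = -∑ i, α i * β i by
            rw [← Finset.sum_neg_distrib]
            exact Finset.sum_congr rfl fun i _ => by ring]
        linear_combination -h
      have hend : (∑ i, (-β i) ^ 2) = a₂ := by
        rw [← h2]
        exact Finset.sum_congr rfl fun i _ => by ring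
      rw [hmid, hend, h0]
end

section
/- Let κ be a field of characteristic 0 and F = x^3 + x·y^3 ∈ κ[x,y]. Then (x,y)^5 ⊆ (x,y)·J(F), where J(F) = (3x^2 + y^3, x·y^2). In particular x^3, x^2y^2, xy^3 and y^5 all lie in (x,y)·J(F). -/
open MvPolynomial

private lemma key_pow_le {R : Type*} [CommRing R] (a b : R) :
    ∀ (n : ℕ) (K : Ideal R), (∀ i ≤ n, a ^ i * b ^ (n - i) ∈ K) →
      Ideal.span {a, b} ^ n ≤ K := by
  intro n
  induction n with
  | zero =>
      intro K h
      have h1 : (1 : R) ∈ K := by simpa using h 0 le_rfl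
      simpa [Ideal.one_eq_top] using top_le_iff.2 ((Ideal.eq_top_iff_one K).2 h1)
  | succ n ih =>
      intro K h
      rw [pow_succ, Ideal.mul_le]
      intro r hr s hs
      induction hs using Submodule.span_induction with
      | mem s hsmem =>
          rw [Set.mem_insert_iff, Set.mem_singleton_iff] at hsmem
          obtain h' | h' := hsmem <;> rw [h']
          · -- s = a
            have hcol : Ideal.span {a, b} ^ n ≤ K.colon (Ideal.span {a}) := by
              apply ih
              intro i hi
              rw [Ideal.mem_colon_span_singleton]
              have := h (i + 1) (by omega)
              have hsub : n + 1 - (i + 1) = n - i := by omega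
              rw [hsub] at this
              rw [show a ^ i * b ^ (n - i) * a = a ^ (i + 1) * b ^ (n - i) from by ring]
              exact this
            exact Ideal.mem_colon_span_singleton.1 (hcol hr)
          · -- s = b
            have hcol : Ideal.span {a, b} ^ n ≤ K.colon (Ideal.span {b}) := by
              apply ih
              intro i hi
              rw [Ideal.mem_colon_span_singleton]
              have := h i (by omega)
              have hsub : n + 1 - i = (n - i) + 1 := by omega
              rw [hsub] at this
              rw [show a ^ i * b ^ (n - i) * b = a ^ i * b ^ (n - i + 1) from by ring]
              exact this
            exact Ideal.mem_colon_span_singleton.1 (hcol hr)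
      | zero => simp
      | add s t _ _ hs ht => simpa [mul_add] using K.add_mem hs ht
      | smul c s _ hs => simpa [smul_eq_mul, mul_left_comm] using K.smul_mem c hs

/-- Let `κ` be a field of characteristic `0` and `F = x³ + x·y³ ∈ κ[x,y]`. Then
`(x,y)⁵ ⊆ (x,y)·J(F)`, where `J(F)` is the Jacobian ideal generated by the partial
derivatives of `F`; in particular `x³`, `x²y²`, `xy³` and `y⁵` all lie in `(x,y)·J(F)`. -/
theorem stmt_9 {κ : Type*} [Field κ] [CharZero κ]
    (F : MvPolynomial (Fin 2) κ) (hF : F = X 0 ^ 3 + X 0 * X 1 ^ 3) :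
    (Ideal.span {(X 0 : MvPolynomial (Fin 2) κ), X 1}) ^ 5 ≤
      Ideal.span {(X 0 : MvPolynomial (Fin 2) κ), X 1} *
        Ideal.span {pderiv 0 F, pderiv 1 F} ∧
    (X 0 ^ 3 : MvPolynomial (Fin 2) κ) ∈
      Ideal.span {(X 0 : MvPolynomial (Fin 2) κ), X 1} *
        Ideal.span {pderiv 0 F, pderiv 1 F} ∧
    (X 0 ^ 2 * X 1 ^ 2 : MvPolynomial (Fin 2) κ) ∈
      Ideal.span {(X 0 : MvPolynomial (Fin 2) κ), X 1} *
        Ideal.span {pderiv 0 F, pderiv 1 F} ∧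
    (X 0 * X 1 ^ 3 : MvPolynomial (Fin 2) κ) ∈
      Ideal.span {(X 0 : MvPolynomial (Fin 2) κ), X 1} *
        Ideal.span {pderiv 0 F, pderiv 1 F} ∧
    (X 1 ^ 5 : MvPolynomial (Fin 2) κ) ∈
      Ideal.span {(X 0 : MvPolynomial (Fin 2) κ), X 1} *
        Ideal.span {pderiv 0 F, pderiv 1 F} := by
  set I : Ideal (MvPolynomial (Fin 2) κ) := Ideal.span {X 0, X 1} with hI
  set J : Ideal (MvPolynomial (Fin 2) κ) := Ideal.span {pderiv 0 F, pderiv 1 F} with hJ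
  -- the partial derivatives
  have e0 : pderiv 0 F = 3 * X 0 ^ 2 + X 1 ^ 3 := by subst hF; simp [pderiv_X]
  have e1 : pderiv 1 F = 3 * (X 0 * X 1 ^ 2) := by subst hF; simp [pderiv_X]; ring
  have h9 : (C (9 : κ)⁻¹ : MvPolynomial (Fin 2) κ) * 9 = 1 := by
    rw [show ((9 : MvPolynomial (Fin 2) κ)) = C 9 from (map_ofNat C 9).symm, ← C_mul]
    norm_num
  have h3 : (C (3 : κ)⁻¹ : MvPolynomial (Fin 2) κ) * 3 = 1 := by
    rw [show ((3 : MvPolynomial (Fin 2) κ)) = C 3 from (map_ofNat C 3).symm, ← C_mul]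
    norm_num
  -- polynomial identities expressing the monomials
  have id3 : (X 0 : MvPolynomial (Fin 2) κ) ^ 3 =
      C (9 : κ)⁻¹ * ((3 * X 0) * pderiv 0 F - X 1 * pderiv 1 F) := by
    rw [e0, e1]
    linear_combination (-(X 0 : MvPolynomial (Fin 2) κ) ^ 3) * h9
  have id22 : (X 0 : MvPolynomial (Fin 2) κ) ^ 2 * X 1 ^ 2 =
      C (3 : κ)⁻¹ * (X 0 * pderiv 1 F) := by
    rw [e1]
    linear_combination (-(X 0 : MvPolynomial (Fin 2) κ) ^ 2 * X 1 ^ 2) * h3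
  have id13 : (X 0 : MvPolynomial (Fin 2) κ) * X 1 ^ 3 =
      C (3 : κ)⁻¹ * (X 1 * pderiv 1 F) := by
    rw [e1]
    linear_combination (-(X 0 : MvPolynomial (Fin 2) κ) * X 1 ^ 3) * h3
  have id5 : (X 1 : MvPolynomial (Fin 2) κ) ^ 5 =
      (X 1 * X 1) * pderiv 0 F - X 0 * pderiv 1 F := by
    rw [e0, e1]; ring
  -- basic memberships
  have hx : (X 0 : MvPolynomial (Fin 2) κ) ∈ I :=
    Ideal.subset_span (Set.mem_insert _ _)
  have hy : (X 1 : MvPolynomial (Fin 2) κ) ∈ I :=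
    Ideal.subset_span (Set.mem_insert_of_mem _ rfl)
  have hp0 : pderiv 0 F ∈ J := Ideal.subset_span (Set.mem_insert _ _)
  have hp1 : pderiv 1 F ∈ J := Ideal.subset_span (Set.mem_insert_of_mem _ rfl)
  -- the four key monomial memberships in I * J
  have hx3 : (X 0 : MvPolynomial (Fin 2) κ) ^ 3 ∈ I * J := by
    rw [id3]
    exact Ideal.mul_mem_left _ _ (Ideal.sub_mem _
      (Ideal.mul_mem_mul (Ideal.mul_mem_left _ _ hx) hp0)
      (Ideal.mul_mem_mul hy hp1))
  have hx2y2 : (X 0 : MvPolynomial (Fin 2) κ) ^ 2 * X 1 ^ 2 ∈ I * J := by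
    rw [id22]
    exact Ideal.mul_mem_left _ _ (Ideal.mul_mem_mul hx hp1)
  have hxy3 : (X 0 : MvPolynomial (Fin 2) κ) * X 1 ^ 3 ∈ I * J := by
    rw [id13]
    exact Ideal.mul_mem_left _ _ (Ideal.mul_mem_mul hy hp1)
  have hy5 : (X 1 : MvPolynomial (Fin 2) κ) ^ 5 ∈ I * J := by
    rw [id5]
    exact Ideal.sub_mem _
      (Ideal.mul_mem_mul (Ideal.mul_mem_left _ _ hy) hp0)
      (Ideal.mul_mem_mul hx hp1)
  refine ⟨?_, hx3, hx2y2, hxy3, hy5⟩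
  -- now (x,y)^5 ≤ I * J
  apply key_pow_le
  intro i hi
  interval_cases i
  · simpa using hy5
  · rw [show (X 0 : MvPolynomial (Fin 2) κ) ^ 1 * X 1 ^ (5 - 1) =
      X 1 * (X 0 * X 1 ^ 3) from by ring]
    exact Ideal.mul_mem_left _ _ hxy3
  · rw [show (X 0 : MvPolynomial (Fin 2) κ) ^ 2 * X 1 ^ (5 - 2) =
      X 1 * (X 0 ^ 2 * X 1 ^ 2) from by ring]
    exact Ideal.mul_mem_left _ _ hx2y2
  · rw [show (X 0 : MvPolynomial (Fin 2) κ) ^ 3 * X 1 ^ (5 - 3) =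
      X 1 ^ 2 * X 0 ^ 3 from by ring]
    exact Ideal.mul_mem_left _ _ hx3
  · rw [show (X 0 : MvPolynomial (Fin 2) κ) ^ 4 * X 1 ^ (5 - 4) =
      (X 0 * X 1) * X 0 ^ 3 from by ring]
    exact Ideal.mul_mem_left _ _ hx3
  · rw [show (X 0 : MvPolynomial (Fin 2) κ) ^ 5 * X 1 ^ (5 - 5) =
      X 0 ^ 2 * X 0 ^ 3 from by ring]
    exact Ideal.mul_mem_left _ _ hx3
end

section
/- Let κ be a linearly ordered field, let f ∈ κ[X,Y], and suppose X^{2ℓ}·f = b_1^2 + ... + b_p^2 for some ℓ ≥ 0 and b_1,...,b_p ∈ κ[X,Y]. Then f itself is a sum of p squares in κ[X,Y]. -/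
/-!
Substituting `X = 0` into `X^(2ℓ) f = ∑ bᵢ²` gives `∑ bᵢ(0, Y)² = 0` in the formally real ring
`κ[Y]`, so every `bᵢ(0, Y)` vanishes, i.e. `X ∣ bᵢ`. Writing `bᵢ = X cᵢ` and cancelling `X²`
lowers `ℓ` by one. Only two properties of `X` enter: it is a non-zero-divisor, and it divides
each `bᵢ` as soon as it divides `∑ bᵢ²`.
-/

open MvPolynomial

theorem IsSumSq.map {R S F : Type*} [NonAssocSemiring R] [NonAssocSemiring S] [FunLike F R S]
    [RingHomClass F R S] (f : F) {s : R} (hs : IsSumSq s) : IsSumSq (f s) := by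
  induction hs with
  | zero => simp [IsSumSq.zero]
  | sq_add a _ ih => simpa using ih.sq_add (f a)

namespace IsFormallyReal

variable {R : Type*}

theorem eq_zero_of_sum_sq_eq_zero {ι : Type*} [CommRing R] [IsFormallyReal R]
    {s : Finset ι} {b : ι → R} (h : ∑ i ∈ s, b i ^ 2 = 0) : ∀ i ∈ s, b i = 0 := by
  classical
  induction s using Finset.induction_on with
  | empty => simp
  | insert j s hj ih =>
    rw [Finset.sum_insert hj] at h
    have hbj : IsSumSq (b j ^ 2) := (IsSquare.sq (b j)).isSumSq
    have hsq : b j ^ 2 = 0 := eq_zero_of_add_right hbj (.sum_sq s b) h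
    have hrest : ∑ i ∈ s, b i ^ 2 = 0 := eq_zero_of_add_left hbj (.sum_sq s b) h
    exact Finset.forall_mem_insert _ _ _ |>.mpr ⟨IsNilpotent.eq_zero ⟨2, hsq⟩, ih hrest⟩

theorem charZero [Ring R] [Nontrivial R] [IsFormallyReal R] : CharZero R :=
  charZero_of_inj_zero fun n hn => by
    by_contra hn0
    obtain ⟨m, rfl⟩ := Nat.exists_eq_succ_of_ne_zero hn0
    push_cast at hn
    exact one_ne_zero (eq_zero_of_add_left (.natCast m) .one hn)

end IsFormallyReal

namespace MvPolynomial

variable {σ R : Type*} [CommRing R]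

instance isFormallyReal [IsDomain R] [IsFormallyReal R] : IsFormallyReal (MvPolynomial σ R) := by
  -- `funext` needs `R` to be infinite, which `CharZero` provides.
  have := IsFormallyReal.charZero (R := R)
  refine .of_eq_zero_of_mul_self_of_eq_zero_of_add mul_self_eq_zero.mp fun hs₁ hs₂ h => ?_
  refine funext fun x => ?_
  rw [map_zero]
  exact IsFormallyReal.eq_zero_of_add_right (hs₁.map (eval x)) (hs₂.map (eval x))
    (by rw [← map_add, h, map_zero])

theorem X_dvd_sub_aeval_update_zero [DecidableEq σ] (i : σ) (p : MvPolynomial σ R) :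
    X i ∣ p - aeval (Function.update X i 0) p := by
  induction p using MvPolynomial.induction_on with
  | C a => simp
  | add p q hp hq =>
    rw [map_add, add_sub_add_comm]
    exact dvd_add hp hq
  | mul_X p j hp =>
    have hXj : X i ∣ X j - Function.update (X : σ → MvPolynomial σ R) i 0 j := by
      by_cases hji : j = i <;> simp [hji]
    rw [map_mul, aeval_X, show ∀ a b c d : MvPolynomial σ R,
      a * b - c * d = (a - c) * b + c * (b - d) by intros; ring]
    exact dvd_add (dvd_mul_of_dvd_left hp _) (dvd_mul_of_dvd_right hXj _)

theorem X_dvd_of_X_dvd_sum_sq [IsDomain R] [IsFormallyReal R] {ι : Type*} {i : σ}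
    {s : Finset ι} {b : ι → MvPolynomial σ R} (h : X i ∣ ∑ j ∈ s, b j ^ 2) :
    ∀ j ∈ s, X i ∣ b j := by
  classical
  obtain ⟨q, hq⟩ := h
  have hsum : ∑ j ∈ s, aeval (Function.update (X : σ → MvPolynomial σ R) i 0) (b j) ^ 2 = 0 := by
    simpa only [map_sum, map_pow, map_mul, aeval_X, Function.update_self, zero_mul]
      using congrArg (aeval (R := R) (Function.update X i 0)) hq
  intro j hj
  have hdvd := X_dvd_sub_aeval_update_zero i (b j)
  rwa [IsFormallyReal.eq_zero_of_sum_sq_eq_zero hsum j hj, sub_zero] at hdvd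

end MvPolynomial

theorem exists_sum_sq_of_pow_mul_eq_sum_sq {A ι : Type*} [CommSemiring A] [IsLeftCancelMulZero A]
    [Fintype ι] {x : A} (hx₀ : x ≠ 0) (hx : ∀ b : ι → A, x ∣ ∑ i, b i ^ 2 → ∀ i, x ∣ b i)
    {f : A} {ℓ : ℕ} {b : ι → A} (h : x ^ (2 * ℓ) * f = ∑ i, b i ^ 2) :
    ∃ c : ι → A, f = ∑ i, c i ^ 2 := by
  induction ℓ generalizing b with
  | zero => exact ⟨b, by simpa using h⟩
  | succ ℓ ih =>
    have hdvd : x ∣ ∑ i, b i ^ 2 := h ▸ dvd_mul_of_dvd_left (dvd_pow_self x (by omega)) f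
    choose c hc using hx b hdvd
    refine ih (b := c) (mul_left_cancel₀ (pow_ne_zero 2 hx₀) ?_)
    calc x ^ 2 * (x ^ (2 * ℓ) * f) = x ^ (2 * (ℓ + 1)) * f := by ring
      _ = ∑ i, (x * c i) ^ 2 := by simp_rw [h, ← hc]
      _ = x ^ 2 * ∑ i, c i ^ 2 := by simp_rw [Finset.mul_sum, mul_pow]

/-- Let `κ` be a linearly ordered field, `f ∈ κ[X,Y]`, and suppose
`X^{2ℓ}·f = b₁² + ⋯ + b_p²` for some `ℓ ≥ 0` and `b₁,…,b_p ∈ κ[X,Y]`.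
Then `f` is itself a sum of `p` squares in `κ[X,Y]`. -/
theorem stmt_15 {κ : Type*} [Field κ] [LinearOrder κ] [IsStrictOrderedRing κ]
    (f : MvPolynomial (Fin 2) κ) (ℓ p : ℕ) (b : Fin p → MvPolynomial (Fin 2) κ)
    (h : (X 0 : MvPolynomial (Fin 2) κ) ^ (2 * ℓ) * f = ∑ i, b i ^ 2) :
    ∃ c : Fin p → MvPolynomial (Fin 2) κ, f = ∑ i, c i ^ 2 :=
  exists_sum_sq_of_pow_mul_eq_sum_sq (X_ne_zero 0)
    (fun _ hb i => X_dvd_of_X_dvd_sum_sq hb i (Finset.mem_univ i)) h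
end
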